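/- If G ⊊ ℝⁿ is a domain such that s_G(x,y) = p_G(x,y) for all x, y ∈ G, then G is a half-space. -/

import Mathlib

open Metric Set

variable {E : Type*} [NormedAddCommGroup E] [NormedSpace ℝ E]

/-- Distance to the boundary of `G`. -/
noncomputable def dG (G : Set E) (x : E) : ℝ := Metric.infDist x (frontier G)

/-- The point pair function `p_G`. -/
noncomputable def pG (G : Set E) (x y : E) : ℝ :=
  dist x y / Real.sqrt (dist x y ^ 2 + 4 * dG G x * dG G y)

/-- The triangular ratio metric `s_G`. -/
noncomputable def sG (G : Set E) (x y : E) : ℝ :=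
  dist x y / ⨅ z : frontier G, (dist x (z : E) + dist (z : E) y)

/-- The `j*_G` metric. -/
noncomputable def jG (G : Set E) (x y : E) : ℝ :=
  dist x y / (dist x y + 2 * min (dG G x) (dG G y))

/-- The set `X̃` of points `x̃` with `|x−x̃| = 2 d_G(x)` whose midpoint with `x` lies on `∂G`. -/
def Xt (G : Set E) (x : E) : Set E :=
  {x' | dist x x' = 2 * dG G x ∧ (2⁻¹ : ℝ) • (x + x') ∈ frontier G}

/-- The quasi-metric `w_G` defined for convex domains. -/
noncomputable def wG (G : Set E) (x y : E) : ℝ :=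
  dist x y / min (Metric.infDist x (Xt G y)) (Metric.infDist y (Xt G x))

/-!
If a segment `[x, y]` with `x, y ∈ G` met `∂G` at `ζ`, the detour `x → ζ → y` would have length
`|x - y| < √(|x - y|² + 4 d(x) d(y))`, so `s_G ≤ p_G` makes `G` convex.

Now let `G` be convex and `w ∈ G` lie on a chord `[z₁, z₂]` with `z₁, z₂ ∈ ∂G`. Put `p` and `q` at
fraction `ε` of the way from `z₁` and `z₂` towards `w`, so that `d(p) d(q) = O(ε²)`. Each `z ∈ ∂G`
lies on a hyperplane supporting `G`; reflecting `q` in it gives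
`|p - z| + |z - q| ≥ √(|p - q|² + 4 h(p) h(q))`, with `h` the distance to that hyperplane. As `h` is
affine along the chord, nonnegative at its ends and at least `δ` at `w` (where `B(w, δ) ⊆ G`), we
get `h(p) h(q) ≥ ε δ²`. For small `ε` this gives `s_G(p, q) < p_G(p, q)`; so `s_G ≥ p_G` makes
`ℝⁿ ∖ G` convex too, and a hyperplane separating `G` from its complement bounds it.
-/

open scoped RealInnerProductSpace

section Detour

variable {V : Type*} [NormedAddCommGroup V]

noncomputable def frontierDetour (G : Set V) (x y : V) : ℝ :=
  ⨅ z : frontier G, (dist x (z : V) + dist (z : V) y)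

lemma sG_eq_div_frontierDetour (G : Set V) (x y : V) :
    sG G x y = dist x y / frontierDetour G x y := rfl

variable {G : Set V} {x y z : V}

lemma frontierDetour_le (hz : z ∈ frontier G) : frontierDetour G x y ≤ dist x z + dist z y :=
  ciInf_le ⟨0, by rintro _ ⟨z, rfl⟩; positivity⟩ (⟨z, hz⟩ : frontier G)

lemma le_frontierDetour {c : ℝ} (hfr : (frontier G).Nonempty)
    (h : ∀ z ∈ frontier G, c ≤ dist x z + dist z y) : c ≤ frontierDetour G x y :=
  have := hfr.to_subtype
  le_ciInf fun z => h z z.2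

lemma dG_add_dG_le_frontierDetour (hfr : (frontier G).Nonempty) :
    dG G x + dG G y ≤ frontierDetour G x y :=
  le_frontierDetour hfr fun z hz => add_le_add (infDist_le_dist_of_mem hz)
    (by rw [dist_comm]; exact infDist_le_dist_of_mem hz)

lemma dG_nonneg : 0 ≤ dG G x := infDist_nonneg

lemma dG_pos (hG : IsOpen G) (hfr : (frontier G).Nonempty) (hx : x ∈ G) : 0 < dG G x :=
  (isClosed_frontier.notMem_iff_infDist_pos hfr).mp
    fun hxf => (disjoint_frontier_iff_isOpen.2 hG).notMem_of_mem_left hxf hx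

lemma frontierDetour_pos (hG : IsOpen G) (hfr : (frontier G).Nonempty) (hx : x ∈ G) :
    0 < frontierDetour G x y :=
  (add_pos_of_pos_of_nonneg (dG_pos hG hfr hx) dG_nonneg).trans_le
    (dG_add_dG_le_frontierDetour hfr)

lemma sG_le_pG_iff (hG : IsOpen G) (hfr : (frontier G).Nonempty) (hx : x ∈ G) (hxy : x ≠ y) :
    sG G x y ≤ pG G x y ↔
      √(dist x y ^ 2 + 4 * dG G x * dG G y) ≤ frontierDetour G x y :=
  div_le_div_iff_of_pos_left (dist_pos.2 hxy) (frontierDetour_pos hG hfr hx)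
    (Real.sqrt_pos.2 (by
      have := dG_pos hG hfr hx; have := dist_pos.2 hxy; have := dG_nonneg (G := G) (x := y)
      positivity))

end Detour

lemma segment_subset_of_disjoint_frontier {G : Set E} {x y : E} (hG : IsOpen G) (hx : x ∈ G)
    (h : Disjoint (segment ℝ x y) (frontier G)) : segment ℝ x y ⊆ G :=
  (convex_segment x y).isPreconnected.subset_of_closure_inter_subset hG
    ⟨x, left_mem_segment ℝ x y, hx⟩ fun z ⟨hzc, hzs⟩ => by
      by_contra hzG
      exact h.notMem_of_mem_left hzs (hG.frontier_eq ▸ ⟨hzc, hzG⟩)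

lemma exists_mem_segment_mem_frontier {G : Set E} {x y : E} (hG : IsOpen G) (hx : x ∈ G)
    (hy : y ∉ G) : ∃ z ∈ segment ℝ x y, z ∈ frontier G := by
  by_contra! h
  exact hy (segment_subset_of_disjoint_frontier hG hx (Set.disjoint_left.2 h)
    (right_mem_segment ℝ x y))

lemma convex_of_sG_le_pG {G : Set E} (hG : IsOpen G)
    (h : ∀ x ∈ G, ∀ y ∈ G, sG G x y ≤ pG G x y) : Convex ℝ G := by
  refine convex_iff_segment_subset.2 fun x hx y hy => segment_subset_of_disjoint_frontier hG hx <|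
    Set.disjoint_left.2 fun ζ hζ hζG => ?_
  have hfr : (frontier G).Nonempty := ⟨ζ, hζG⟩
  have hxy : x ≠ y := by
    rintro rfl
    rw [segment_same, mem_singleton_iff] at hζ
    exact (disjoint_frontier_iff_isOpen.2 hG).notMem_of_mem_left hζG (hζ ▸ hx)
  have hshort : frontierDetour G x y ≤ dist x y :=
    (frontierDetour_le hζG).trans_eq (dist_add_dist_of_mem_segment hζ)
  have hlong : dist x y < √(dist x y ^ 2 + 4 * dG G x * dG G y) :=
    (Real.lt_sqrt dist_nonneg).2 (by nlinarith [dG_pos hG hfr hx, dG_pos hG hfr hy])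
  linarith [(sG_le_pG_iff hG hfr hx hxy).1 (h x hx y hy)]

section InnerProduct

variable {F : Type*} [NormedAddCommGroup F] [InnerProductSpace ℝ F]

lemma sq_dist_add_four_mul_inner_le {a : F} (ha : ‖a‖ = 1) (p q z : F) :
    dist p q ^ 2 + 4 * ⟪a, z - p⟫ * ⟪a, z - q⟫ ≤ (dist p z + dist z q) ^ 2 := by
  -- `q'` is the reflection of `q` in the hyperplane through `z` orthogonal to `a`
  set q' := q + (2 * ⟪a, z - q⟫) • a
  have haa : ⟪a, a⟫ = 1 := by rw [real_inner_self_eq_norm_sq, ha, one_pow]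
  have hzq' : dist z q' = dist z q := by
    rw [dist_eq_norm, dist_eq_norm, ← sq_eq_sq₀ (norm_nonneg _) (norm_nonneg _),
      show z - q' = (z - q) - (2 * ⟪a, z - q⟫) • a by simp only [q']; abel,
      norm_sub_sq_real, inner_smul_right, real_inner_comm, norm_smul, ha]
    simp only [Real.norm_eq_abs, mul_one, sq_abs]
    ring
  have hpq' : dist p q' ^ 2 = dist p q ^ 2 + 4 * ⟪a, z - p⟫ * ⟪a, z - q⟫ := by
    rw [dist_eq_norm, dist_eq_norm,
      show p - q' = (p - q) - (2 * ⟪a, z - q⟫) • a by simp only [q']; abel,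
      norm_sub_sq_real, inner_smul_right, norm_smul, ha,
      show p - q = (z - q) - (z - p) by abel, inner_sub_left, real_inner_comm (z - q),
      real_inner_comm (z - p)]
    simp only [Real.norm_eq_abs, mul_one, sq_abs]
    ring
  rw [← hpq', ← hzq']
  exact pow_le_pow_left₀ dist_nonneg (dist_triangle p z q') 2

lemma le_sub_inner_of_forall_mem_ball {a w : F} {δ t : ℝ} (ha : ‖a‖ = 1) (hδ : 0 < δ)
    (h : ∀ u ∈ ball w δ, ⟪a, u⟫ < t) : δ ≤ t - ⟪a, w⟫ := by
  by_contra! hlt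
  have hpos : 0 < t - ⟪a, w⟫ := sub_pos.2 (h w (mem_ball_self hδ))
  have hmem : w + (t - ⟪a, w⟫) • a ∈ ball w δ := by
    rwa [mem_ball, dist_eq_norm, add_sub_cancel_left, norm_smul, ha, mul_one,
      Real.norm_of_nonneg hpos.le]
  have := h _ hmem
  rw [inner_add_right, inner_smul_right, real_inner_self_eq_norm_sq, ha] at this
  linarith

variable [CompleteSpace F] {G : Set F} {z₁ z₂ w : F} {δ : ℝ}

lemma exists_norm_eq_one_inner_lt_of_notMem {z : F} (hG : IsOpen G) (hconv : Convex ℝ G)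
    (hne : G.Nonempty) (hz : z ∉ G) :
    ∃ a : F, ‖a‖ = 1 ∧ ∀ u ∈ G, ⟪a, u⟫ < ⟪a, z⟫ := by
  obtain ⟨f, hf⟩ := geometric_hahn_banach_open_point hconv hG hz
  set v := (InnerProductSpace.toDual ℝ F).symm f
  have hv : ∀ u, ⟪v, u⟫ = f u := fun u => InnerProductSpace.toDual_symm_apply
  obtain ⟨u₀, hu₀⟩ := hne
  have hv0 : v ≠ 0 := by
    rintro h0
    have := hf u₀ hu₀
    rw [← hv, ← hv, h0, inner_zero_left, inner_zero_left] at this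
    exact lt_irrefl 0 this
  refine ⟨‖v‖⁻¹ • v, ?_, fun u hu => ?_⟩
  · rw [norm_smul, norm_inv, norm_norm, inv_mul_cancel₀ (norm_ne_zero_iff.2 hv0)]
  · rw [inner_smul_left, inner_smul_left, hv, hv]
    exact mul_lt_mul_of_pos_left (hf u hu) (by simpa using hv0)

open AffineMap in
lemma sq_dist_add_le_of_mem_chord (hG : IsOpen G) (hconv : Convex ℝ G)
    (hz₁ : z₁ ∈ closure G) (hz₂ : z₂ ∈ closure G) (hw : w ∈ segment ℝ z₁ z₂) (hδ : 0 < δ)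
    (hball : ball w δ ⊆ G) {ε : ℝ} (hε : ε ∈ Icc (0 : ℝ) 1) {z : F} (hz : z ∉ G) :
    dist (lineMap z₁ w ε) (lineMap z₂ w ε) ^ 2 + 4 * ε * δ ^ 2 ≤
      (dist (lineMap z₁ w ε) z + dist z (lineMap z₂ w ε)) ^ 2 := by
  obtain ⟨a, ha, hsep⟩ := exists_norm_eq_one_inner_lt_of_notMem hG hconv
    ⟨w, hball (mem_ball_self hδ)⟩ hz
  have hclosure : closure G ⊆ {u | ⟪a, u⟫ ≤ ⟪a, z⟫} :=
    closure_minimal (fun u hu => (hsep u hu).le)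
      (isClosed_le (innerSL ℝ a).continuous continuous_const)
  -- `h u` is the distance from `u` to the separating hyperplane through `z`
  set h : F → ℝ := fun u => ⟪a, z⟫ - ⟪a, u⟫
  have h₁ : 0 ≤ h z₁ := sub_nonneg.2 (hclosure hz₁)
  have h₂ : 0 ≤ h z₂ := sub_nonneg.2 (hclosure hz₂)
  have hδw : δ ≤ h w := le_sub_inner_of_forall_mem_ball ha hδ fun u hu => hsep u (hball hu)
  have hw₁₂ : h w ≤ h z₁ + h z₂ := by
    obtain ⟨α, β, hα, hβ, hαβ, rfl⟩ := hw
    have hcomb : h (α • z₁ + β • z₂) = α * h z₁ + β * h z₂ := by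
      simp only [h, inner_add_right, inner_smul_right]
      linear_combination (-⟪a, z⟫) * hαβ
    nlinarith [mul_nonneg hβ h₁, mul_nonneg hα h₂]
  have hline : ∀ y, h (lineMap y w ε) = (1 - ε) * h y + ε * h w := fun y => by
    simp only [h, lineMap_apply_module, inner_add_right, inner_smul_right]
    ring
  calc dist (lineMap z₁ w ε) (lineMap z₂ w ε) ^ 2 + 4 * ε * δ ^ 2
      ≤ dist (lineMap z₁ w ε) (lineMap z₂ w ε) ^ 2 +
          4 * h (lineMap z₁ w ε) * h (lineMap z₂ w ε) := by
        rw [hline, hline]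
        obtain ⟨hε₀, hε₁⟩ := hε
        have hhw : 0 ≤ h w := hδ.le.trans hδw
        nlinarith [mul_nonneg (mul_nonneg h₁ h₂) (sq_nonneg (1 - ε)),
          mul_nonneg (mul_nonneg (mul_nonneg hε₀ (sub_nonneg.2 hε₁)) hhw) (sub_nonneg.2 hw₁₂),
          mul_nonneg hε₀ (sub_nonneg.2 (mul_self_le_mul_self hδ.le hδw))]
    _ ≤ _ := by
        simpa only [inner_sub_right] using sq_dist_add_four_mul_inner_le ha _ _ z

open AffineMap in
lemma exists_sG_lt_pG_of_mem_segment (hG : IsOpen G) (hconv : Convex ℝ G)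
    (hz₁ : z₁ ∈ frontier G) (hz₂ : z₂ ∈ frontier G) (hwG : w ∈ G) (hw : w ∈ segment ℝ z₁ z₂) :
    ∃ p ∈ G, ∃ q ∈ G, sG G p q < pG G p q := by
  obtain ⟨δ, hδ, hball⟩ := Metric.isOpen_iff.1 hG w hwG
  set D := dist w z₁ * dist w z₂
  have hD : 0 ≤ D := by positivity
  -- any `ε` with `ε D < δ²` works: then `4 d(p) d(q) ≤ 4 ε² D < 4 ε δ²`
  set ε := δ ^ 2 / (2 * (D + δ ^ 2))
  have hεDδ : ε * (D + δ ^ 2) = δ ^ 2 / 2 := by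
    simp only [ε]; field_simp
  have hε₀ : 0 < ε := by positivity
  have hε₁ : ε < 1 := by nlinarith
  have hεD : ε * D < δ ^ 2 := by nlinarith
  have hmem : ∀ {y}, y ∈ frontier G → lineMap y w ε ∈ G := fun hy => by
    rw [← hG.interior_eq]
    refine hconv.openSegment_closure_interior_subset_interior (frontier_subset_closure hy)
      (hG.interior_eq.symm ▸ hwG) ?_
    rw [openSegment_eq_image_lineMap]
    exact ⟨ε, ⟨hε₀, hε₁⟩, rfl⟩
  have hdG : ∀ {y}, y ∈ frontier G → dG G (lineMap y w ε) ≤ ε * dist w y := fun hy => by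
    refine (infDist_le_dist_of_mem hy).trans_eq ?_
    rw [dist_lineMap_left, Real.norm_of_nonneg hε₀.le, dist_comm]
  set p := lineMap z₁ w ε
  set q := lineMap z₂ w ε
  have hpq : p ≠ q := by
    intro hpq
    have hz : z₁ = z₂ := smul_right_injective F (sub_ne_zero.2 hε₁.ne') <| add_right_cancel <|
      by simpa only [p, q, lineMap_apply_module] using hpq
    rw [← hz, segment_same, mem_singleton_iff] at hw
    exact (disjoint_frontier_iff_isOpen.2 hG).notMem_of_mem_left hz₁ (hw ▸ hwG)
  have hfr : (frontier G).Nonempty := ⟨z₁, hz₁⟩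
  have hdetour : √(dist p q ^ 2 + 4 * ε * δ ^ 2) ≤ frontierDetour G p q :=
    le_frontierDetour hfr fun z hz => (Real.sqrt_le_left (by positivity)).2 <|
      sq_dist_add_le_of_mem_chord hG hconv (frontier_subset_closure hz₁)
        (frontier_subset_closure hz₂) hw hδ hball ⟨hε₀.le, hε₁.le⟩
        ((disjoint_frontier_iff_isOpen.2 hG).notMem_of_mem_left hz)
  have hdGpq : 4 * dG G p * dG G q < 4 * ε * δ ^ 2 := by
    have := mul_le_mul (hdG hz₁) (hdG hz₂) dG_nonneg (by positivity)
    nlinarith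
  have hp₀ : 0 ≤ dG G p := dG_nonneg
  have hq₀ : 0 ≤ dG G q := dG_nonneg
  refine ⟨p, hmem hz₁, q, hmem hz₂, ?_⟩
  rw [sG_eq_div_frontierDetour, pG]
  refine div_lt_div_of_pos_left (dist_pos.2 hpq) ?_ ((Real.sqrt_lt_sqrt ?_ ?_).trans_le hdetour)
  · exact Real.sqrt_pos.2 (by have := dist_pos.2 hpq; positivity)
  · positivity
  · linarith

lemma convex_compl_of_pG_le_sG (hG : IsOpen G) (hconv : Convex ℝ G)
    (h : ∀ x ∈ G, ∀ y ∈ G, pG G x y ≤ sG G x y) : Convex ℝ Gᶜ := by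
  refine convex_iff_segment_subset.2 fun a ha b hb w hw hwG => ?_
  obtain ⟨z₁, hz₁, hz₁G⟩ := exists_mem_segment_mem_frontier hG hwG ha
  obtain ⟨z₂, hz₂, hz₂G⟩ := exists_mem_segment_mem_frontier hG hwG hb
  have hw₁₂ : w ∈ segment ℝ z₁ z₂ := by
    rw [mem_segment_iff_wbtw] at hw hz₁ hz₂ ⊢
    exact (hw.trans_left_right hz₁.symm).trans_right_left hz₂
  obtain ⟨p, hp, q, hq, hlt⟩ := exists_sG_lt_pG_of_mem_segment hG hconv hz₁G hz₂G hwG hw₁₂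
  exact (h p hp q hq).not_gt hlt

lemma exists_eq_setOf_lt_inner (hG : IsOpen G) (hconv : Convex ℝ G) (hcompl : Convex ℝ Gᶜ)
    (hne : G.Nonempty) (hGne : G ≠ univ) : ∃ (a : F) (b : ℝ), a ≠ 0 ∧ G = {x | b < ⟪a, x⟫} := by
  obtain ⟨f, u, hfG, hfGc⟩ := geometric_hahn_banach_open hconv hG hcompl disjoint_compl_right
  set v := (InnerProductSpace.toDual ℝ F).symm f
  have hv : ∀ x, ⟪v, x⟫ = f x := fun x => InnerProductSpace.toDual_symm_apply
  have hG_eq : G = {x | ⟪v, x⟫ < u} := by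
    ext x
    rw [mem_ofPred_eq, hv]
    exact ⟨hfG x, fun hx => by_contra fun hxG => (hfGc x hxG).not_gt hx⟩
  refine ⟨-v, -u, ?_, ?_⟩
  · rintro hv0
    obtain ⟨x, hx⟩ := hne
    obtain ⟨y, hy⟩ := (ne_univ_iff_exists_notMem G).1 hGne
    have hv0 : v = 0 := neg_eq_zero.1 hv0
    rw [hG_eq, hv0, mem_ofPred_eq, inner_zero_left] at hx hy
    exact hy hx
  · simp only [hG_eq, inner_neg_left, neg_lt_neg_iff]

end InnerProduct

/-- If `G ⊊ ℝⁿ` is a domain with `s_G(x,y) = p_G(x,y)` for all `x, y ∈ G`, then `G` is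
a half-space. -/
theorem halfspace_of_s_eq_p (n : ℕ) (G : Set (EuclideanSpace ℝ (Fin n)))
    (hGopen : IsOpen G) (hGconn : IsConnected G) (hGne : G ≠ Set.univ)
    (h : ∀ x ∈ G, ∀ y ∈ G, sG G x y = pG G x y) :
    ∃ (a : EuclideanSpace ℝ (Fin n)) (b : ℝ), a ≠ 0 ∧
      G = {x : EuclideanSpace ℝ (Fin n) | b < (inner ℝ a x : ℝ)} := by
  have hconv : Convex ℝ G := convex_of_sG_le_pG hGopen fun x hx y hy => (h x hx y hy).le
  have hcompl : Convex ℝ Gᶜ :=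
    convex_compl_of_pG_le_sG hGopen hconv fun x hx y hy => (h x hx y hy).ge
  exact exists_eq_setOf_lt_inner hGopen hconv hcompl hGconn.nonempty hGne
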